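/- Let P₁(ρ) = XρX (applying Pauli X) and P₂(ρ) = ρ (skip) on one-qubit density operators, and let A = B = |Ψ⟩⟨Ψ| where |Ψ⟩ = (|00⟩+|11⟩)/√2. Then: (a) every positive operator ρ with supp(ρ) ⊆ span{|Ψ⟩} has both marginals equal to (tr ρ/2)I, so ρ itself is a coupling of the outputs P₁(tr₂ρ) and P₂(tr₁ρ) with support in B; but (b) for the separable input ρ = |00⟩⟨00|, the unique coupling of the outputs |1⟩⟨1| and |0⟩⟨0| is σ = |10⟩⟨10|, and tr(Aρ) = 1/2 > 0 = tr(Bσ). Hence projective validity does not imply general validity of relational judgments. -/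

import Mathlib

open Matrix
open scoped ComplexOrder

noncomputable section

def ptr2 {n m : Type*} [Fintype m] (ρ : Matrix (n × m) (n × m) ℂ) : Matrix n n ℂ :=
  Matrix.of fun i j => ∑ k, ρ (i, k) (j, k)

def ptr1 {n m : Type*} [Fintype n] (ρ : Matrix (n × m) (n × m) ℂ) : Matrix m m ℂ :=
  Matrix.of fun i j => ∑ k, ρ (k, i) (k, j)

def Xgate : Matrix (Fin 2) (Fin 2) ℂ := !![0, 1; 1, 0]

/-- The projector onto the Bell state |Ψ⟩ = (|00⟩ + |11⟩)/√2. -/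
def PBell : Matrix (Fin 2 × Fin 2) (Fin 2 × Fin 2) ℂ :=
  Matrix.of fun p q => if p.1 = p.2 ∧ q.1 = q.2 then 1 / 2 else 0

set_option linter.unreachableTactic false
set_option linter.unusedTactic false

lemma hXX : Xgate * Xgate = 1 := by
  ext i j
  fin_cases i <;> fin_cases j <;>
    simp [Xgate, mul_apply, Fin.sum_univ_two, one_apply]


lemma hXEX : Xgate * Matrix.single 0 0 (1 : ℂ) * Xgate
    = Matrix.single 1 1 (1 : ℂ) := by
  ext i j
  fin_cases i <;> fin_cases j <;>
    simp [Xgate, Matrix.single, mul_apply, Fin.sum_univ_two, Matrix.vecHead, Matrix.vecTail]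


lemma partA (ρ : Matrix (Fin 2 × Fin 2) (Fin 2 × Fin 2) ℂ)
    (hpsd : ρ.PosSemidef) (heq : PBell * ρ = ρ) :
    ptr2 ρ = (ρ.trace / 2) • (1 : Matrix (Fin 2) (Fin 2) ℂ) ∧
    ptr1 ρ = (ρ.trace / 2) • (1 : Matrix (Fin 2) (Fin 2) ℂ) ∧
    Xgate * ptr2 ρ * Xgate = ptr2 ρ := by
  have hcol : ρ * PBell = ρ := by
    have hP : PBellᴴ = PBell := by
      ext p q
      simp only [conjTranspose_apply, PBell, of_apply]
      split_ifs with h1 h2 h2 <;> simp_all [and_comm] <;> tauto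
    calc ρ * PBell = (PBellᴴ * ρᴴ)ᴴ := by simp [conjTranspose_mul, hpsd.1]
    _ = ρ := by rw [hP, hpsd.1, heq, hpsd.1]
  have h1 : ∀ q, ρ ((0:Fin 2),(1:Fin 2)) q = 0 := by
    intro q
    have := congrFun (congrFun heq ((0:Fin 2),(1:Fin 2))) q
    simpa [mul_apply, PBell, Fintype.sum_prod_type, Fin.sum_univ_two] using this.symm
  have h2 : ∀ q, ρ ((1:Fin 2),(0:Fin 2)) q = 0 := by
    intro q
    have := congrFun (congrFun heq ((1:Fin 2),(0:Fin 2))) q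
    simpa [mul_apply, PBell, Fintype.sum_prod_type, Fin.sum_univ_two] using this.symm
  have hc1 : ∀ p, ρ p ((0:Fin 2),(1:Fin 2)) = 0 := by
    intro p
    have := congrFun (congrFun hcol p) ((0:Fin 2),(1:Fin 2))
    simpa [mul_apply, PBell, Fintype.sum_prod_type, Fin.sum_univ_two] using this.symm
  have hc2 : ∀ p, ρ p ((1:Fin 2),(0:Fin 2)) = 0 := by
    intro p
    have := congrFun (congrFun hcol p) ((1:Fin 2),(0:Fin 2))
    simpa [mul_apply, PBell, Fintype.sum_prod_type, Fin.sum_univ_two] using this.symm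
  have h3 : ∀ q, ρ ((1:Fin 2),(1:Fin 2)) q = ρ ((0:Fin 2),(0:Fin 2)) q := by
    intro q
    have := congrFun (congrFun heq ((0:Fin 2),(0:Fin 2))) q
    simp [mul_apply, PBell, Fintype.sum_prod_type, Fin.sum_univ_two] at this
    linear_combination 2 * this
  have h4 : ∀ p, ρ p ((1:Fin 2),(1:Fin 2)) = ρ p ((0:Fin 2),(0:Fin 2)) := by
    intro p
    have := congrFun (congrFun hcol p) ((0:Fin 2),(0:Fin 2))
    simp [mul_apply, PBell, Fintype.sum_prod_type, Fin.sum_univ_two] at this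
    linear_combination 2 * this
  have ha : ρ.trace = 2 * ρ ((0:Fin 2),(0:Fin 2)) ((0:Fin 2),(0:Fin 2)) := by
    simp [trace, Matrix.diag, Fintype.sum_prod_type, Fin.sum_univ_two, h1, h2, h3, h4, -Prod.mk_one_one, -Prod.mk_zero_zero]
    ring
  have g1 : ptr2 ρ = (ρ.trace / 2) • (1 : Matrix (Fin 2) (Fin 2) ℂ) := by
    funext i j
    fin_cases i <;> fin_cases j <;>
      simp [ptr2, Fin.sum_univ_two, ha, Matrix.smul_apply, one_apply, h1, h2, h3, h4, hc1, hc2, -Prod.mk_one_one, -Prod.mk_zero_zero] <;>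
      ring
  have g2 : ptr1 ρ = (ρ.trace / 2) • (1 : Matrix (Fin 2) (Fin 2) ℂ) := by
    funext i j
    fin_cases i <;> fin_cases j <;>
      simp [ptr1, Fin.sum_univ_two, ha, Matrix.smul_apply, one_apply, h1, h2, h3, h4, hc1, hc2, -Prod.mk_one_one, -Prod.mk_zero_zero] <;>
      ring
  refine ⟨g1, g2, ?_⟩
  rw [g1, mul_smul_comm, mul_one, smul_mul_assoc, hXX]

lemma partB (σ : Matrix (Fin 2 × Fin 2) (Fin 2 × Fin 2) ℂ)
    (hpsd : σ.PosSemidef)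
    (hp2 : ptr2 σ = Xgate * Matrix.single 0 0 (1 : ℂ) * Xgate)
    (hp1 : ptr1 σ = Matrix.single 0 0 (1 : ℂ)) :
    σ = Matrix.single ((1 : Fin 2), (0 : Fin 2))
          ((1 : Fin 2), (0 : Fin 2)) (1 : ℂ) := by
  rw [hXEX] at hp2
  obtain ⟨B, rfl⟩ : ∃ B : Matrix (Fin 2 × Fin 2) (Fin 2 × Fin 2) ℂ, σ = Bᴴ * B := by
    open scoped MatrixOrder Matrix.Norms.L2Operator in
    exact CStarAlgebra.nonneg_iff_eq_star_mul_self.mp hpsd.nonneg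
  set σ := Bᴴ * B with hσ
  have hdiag : ∀ p, σ p p = ((∑ k, Complex.normSq (B k p) : ℝ) : ℂ) := by
    intro p
    simp [hσ, mul_apply, conjTranspose_apply, Complex.normSq_eq_conj_mul_self]
  set s : Fin 2 × Fin 2 → ℝ := fun p => ∑ k, Complex.normSq (B k p) with hs
  have hsnn : ∀ p, 0 ≤ s p := fun p =>
    Finset.sum_nonneg fun k _ => Complex.normSq_nonneg _
  have e1 : s (0,0) + s (0,1) = 0 := by
    have := congrFun (congrFun hp2 0) 0
    rw [ptr2] at this
    simp only [of_apply, Fin.sum_univ_two, hdiag] at this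
    have h2 : ((s (0,0) + s (0,1) : ℝ) : ℂ) = 0 := by
      push_cast
      rw [this]
      simp [Matrix.single]
    exact_mod_cast h2
  have e2 : s (0,1) + s (1,1) = 0 := by
    have := congrFun (congrFun hp1 1) 1
    rw [ptr1] at this
    simp only [of_apply, Fin.sum_univ_two, hdiag] at this
    have h2 : ((s (0,1) + s (1,1) : ℝ) : ℂ) = 0 := by
      push_cast
      rw [this]
      simp [Matrix.single]
    exact_mod_cast h2
  have hz : ∀ p : Fin 2 × Fin 2, s p = 0 → ∀ k, B k p = 0 := by
    intro p hp k
    have := (Finset.sum_eq_zero_iff_of_nonneg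
      (fun k _ => Complex.normSq_nonneg (B k p))).mp hp k (Finset.mem_univ k)
    exact Complex.normSq_eq_zero.mp this
  have hBz : ∀ (k p : Fin 2 × Fin 2), p ≠ ((1:Fin 2),(0:Fin 2)) → B k p = 0 := by
    have hB00 : ∀ k, B k (0,0) = 0 :=
      hz _ (by have := hsnn (0,0); have := hsnn (0,1); linarith)
    have hB01 : ∀ k, B k (0,1) = 0 :=
      hz _ (by have := hsnn (0,0); have := hsnn (0,1); linarith)
    have hB11 : ∀ k, B k (1,1) = 0 :=
      hz _ (by have := hsnn (0,1); have := hsnn (1,1); linarith)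
    intro k p hp
    fin_cases p
    · exact hB00 k
    · exact hB01 k
    · exact absurd rfl hp
    · exact hB11 k
  have hval : σ ((1:Fin 2),(0:Fin 2)) ((1:Fin 2),(0:Fin 2)) = 1 := by
    have h := congrFun (congrFun hp1 0) 0
    rw [ptr1] at h
    simp only [of_apply, Fin.sum_univ_two] at h
    have h00 : B ((0:Fin 2),(0:Fin 2)) = B (((0:Fin 2),(0:Fin 2)) : Fin 2 × Fin 2) := rfl
    rw [show σ ((0:Fin 2),(0:Fin 2)) ((0:Fin 2),(0:Fin 2)) = 0 by
      simp [hσ, mul_apply, conjTranspose_apply, fun k => hBz k ((0:Fin 2),(0:Fin 2)) (by decide), -Prod.mk_zero_zero]] at h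
    rw [zero_add] at h
    simpa [Matrix.single] using h
  funext p q
  by_cases hp : p = ((1:Fin 2),(0:Fin 2))
  · by_cases hq : q = ((1:Fin 2),(0:Fin 2))
    · subst hp; subst hq
      rw [hval]
      simp [Matrix.single]
    · have : σ p q = 0 := by
        simp [hσ, mul_apply, conjTranspose_apply, fun k => hBz k q hq, -Prod.mk_zero_zero, -Prod.mk_one_one]
      rw [this]
      simp [Matrix.single, Ne.symm hq, hq]
  · have : σ p q = 0 := by
      simp [hσ, mul_apply, conjTranspose_apply, fun k => hBz k p hp, -Prod.mk_zero_zero, -Prod.mk_one_one]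
    rw [this]
    simp [Matrix.single, Ne.symm hp, hp]


/-- Projective validity does not imply general validity: with P₁ = X·X, P₂ = id,
A = B = |Ψ⟩⟨Ψ|: (a) every input supported on the Bell state couples its own outputs
with support in B, but (b) for the separable input |00⟩⟨00| the unique coupling of
the outputs is |10⟩⟨10| and tr(A|00⟩⟨00|) = 1/2 > 0 = tr(B|10⟩⟨10|). -/
theorem projective_not_implies_general :
    (∀ ρ : Matrix (Fin 2 × Fin 2) (Fin 2 × Fin 2) ℂ,
        ρ.PosSemidef → PBell * ρ = ρ →
          ptr2 ρ = (ρ.trace / 2) • (1 : Matrix (Fin 2) (Fin 2) ℂ) ∧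
          ptr1 ρ = (ρ.trace / 2) • (1 : Matrix (Fin 2) (Fin 2) ℂ) ∧
          Xgate * ptr2 ρ * Xgate = ptr2 ρ) ∧
    (∀ σ : Matrix (Fin 2 × Fin 2) (Fin 2 × Fin 2) ℂ,
        σ.PosSemidef →
        ptr2 σ = Xgate * Matrix.single 0 0 (1 : ℂ) * Xgate →
        ptr1 σ = Matrix.single 0 0 (1 : ℂ) →
        σ = Matrix.single ((1 : Fin 2), (0 : Fin 2))
              ((1 : Fin 2), (0 : Fin 2)) (1 : ℂ)) ∧
    (PBell * Matrix.single ((0 : Fin 2), (0 : Fin 2))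
        ((0 : Fin 2), (0 : Fin 2)) (1 : ℂ)).trace = 1 / 2 ∧
    (PBell * Matrix.single ((1 : Fin 2), (0 : Fin 2))
        ((1 : Fin 2), (0 : Fin 2)) (1 : ℂ)).trace = 0 ∧
    (0 : ℝ) < 1 / 2 := by
  refine ⟨partA, partB, ?_, ?_, by norm_num⟩
  · simp [trace, Matrix.diag, mul_apply, PBell, Matrix.single,
      Fintype.sum_prod_type, Fin.sum_univ_two, Prod.ext_iff]
  · simp [trace, Matrix.diag, mul_apply, PBell, Matrix.single,
      Fintype.sum_prod_type, Fin.sum_univ_two, Prod.ext_iff]
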